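/- Let m be a line in Euclidean 3-space, r > 0, and let C = {x ∈ ℝ³ : Metric.infDist x m = r} be the circular cylinder of radius r about m. If L is a line not contained in C, then L ∩ C has at most two points. In particular, no line in ℝ³ other than a ruling meets more than two of the ruling lines of a circular cylinder. -/
import Mathlib

noncomputable section

open Metric RealInnerProductSpace

/-- Euclidean 3-space. -/
abbrev E3 : Type := EuclideanSpace ℝ (Fin 3)

/-- A line in `ℝ³`: a 1-dimensional affine subspace. -/
def IsLine (L : AffineSubspace ℝ E3) : Prop := Module.finrank ℝ L.direction = 1

/-- A plane in `ℝ³`: a 2-dimensional affine subspace. -/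
def IsPlane (P : AffineSubspace ℝ E3) : Prop := Module.finrank ℝ P.direction = 2

/-- A line is tangent to the sphere with centre `c` and radius `r` if the distance
from `c` to the line equals `r`. -/
def Tangent (c : E3) (r : ℝ) (L : AffineSubspace ℝ E3) : Prop :=
  Metric.infDist c (L : Set E3) = r

/-- A line `L` meets a line `ℓ` if they have a common point. -/
def Meets (L ℓ : AffineSubspace ℝ E3) : Prop :=
  ((L : Set E3) ∩ (ℓ : Set E3)).Nonempty

lemma span_of_finrank_one (S : Submodule ℝ E3) (h : Module.finrank ℝ S = 1) :
    ∃ v : E3, v ≠ 0 ∧ S = Submodule.span ℝ {v} := by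
  rw [finrank_eq_one_iff'] at h
  obtain ⟨⟨v, hvS⟩, hv0, hv⟩ := h
  refine ⟨v, fun h0 => hv0 (by simp [Subtype.ext_iff, h0]), le_antisymm ?_ ?_⟩
  · intro w hw
    obtain ⟨c, hc⟩ := hv ⟨w, hw⟩
    rw [Subtype.ext_iff] at hc
    exact Submodule.mem_span_singleton.2 ⟨c, hc⟩
  · rw [Submodule.span_le, Set.singleton_subset_iff]; exact hvS

lemma quad_three_roots {a b c t1 t2 t3 : ℝ} (h12 : t1 ≠ t2) (h13 : t1 ≠ t3) (h23 : t2 ≠ t3)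
    (h1 : a*t1^2 + b*t1 + c = 0) (h2 : a*t2^2 + b*t2 + c = 0)
    (h3 : a*t3^2 + b*t3 + c = 0) : a = 0 ∧ b = 0 ∧ c = 0 := by
  have e12 : (t1 - t2) * (a*(t1+t2) + b) = 0 := by linear_combination h1 - h2
  have e13 : (t1 - t3) * (a*(t1+t3) + b) = 0 := by linear_combination h1 - h3
  have f12 : a*(t1+t2) + b = 0 := by
    rcases mul_eq_zero.1 e12 with h | h
    · exact absurd (sub_eq_zero.1 h) h12
    · exact h
  have f13 : a*(t1+t3) + b = 0 := by
    rcases mul_eq_zero.1 e13 with h | h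
    · exact absurd (sub_eq_zero.1 h) h13
    · exact h
  have ha : a = 0 := by
    have : a * (t2 - t3) = 0 := by linear_combination f12 - f13
    rcases mul_eq_zero.1 this with h | h
    · exact h
    · exact absurd (sub_eq_zero.1 h) h23
  have hb : b = 0 := by linear_combination f12 - (t1 + t2) * ha
  exact ⟨ha, hb, by linear_combination h1 - t1^2 * ha - t1 * hb⟩

lemma mem_line_iff (L : AffineSubspace ℝ E3) (p : E3) (hp : p ∈ L) (v : E3)
    (hdir : L.direction = Submodule.span ℝ {v}) (y : E3) :
    y ∈ L ↔ ∃ t : ℝ, y = t • v + p := by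
  constructor
  · intro hy
    have h : y -ᵥ p ∈ L.direction := AffineSubspace.vsub_mem_direction hy hp
    rw [hdir, Submodule.mem_span_singleton] at h
    obtain ⟨t, ht⟩ := h
    exact ⟨t, by rw [ht]; simp [vsub_eq_sub]⟩
  · rintro ⟨t, rfl⟩
    have h : t • v ∈ L.direction := by
      rw [hdir]; exact Submodule.smul_mem _ _ (Submodule.mem_span_singleton_self v)
    simpa using AffineSubspace.vadd_mem_of_mem_direction h hp

lemma infDist_line (m : AffineSubspace ℝ E3) (q : E3) (hq : q ∈ m) (u : E3)
    (hu : ‖u‖ = 1) (hdir : m.direction = Submodule.span ℝ {u}) (x : E3) :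
    Metric.infDist x (m : Set E3) = Real.sqrt (‖x - q‖^2 - ⟪x - q, u⟫^2) := by
  set D : ℝ := ‖x - q‖^2 - ⟪x - q, u⟫^2 with hD
  have hne : (m : Set E3).Nonempty := ⟨q, hq⟩
  have key : ∀ s : ℝ, dist x (s • u + q) ^ 2 = D + (⟪x - q, u⟫ - s)^2 := by
    intro s
    rw [dist_eq_norm]
    have h : x - (s • u + q) = (x - q) - s • u := by abel
    rw [h, norm_sub_sq_real, real_inner_smul_right, norm_smul, hu]
    rw [show (‖s‖ * 1) ^ 2 = s ^ 2 by rw [mul_one, Real.norm_eq_abs, sq_abs]]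
    rw [hD]; ring
  have hDnn : 0 ≤ D := by
    nlinarith [key ⟪x - q, u⟫, sq_nonneg (dist x (⟪x - q, u⟫ • u + q))]
  apply le_antisymm
  · have hmem' : (⟪x - q, u⟫ • u + q) ∈ m :=
      (mem_line_iff m q hq u hdir _).2 ⟨_, rfl⟩
    have h2 : dist x (⟪x - q, u⟫ • u + q) ^ 2 = D := by rw [key]; ring
    have h3 : dist x (⟪x - q, u⟫ • u + q) = Real.sqrt D := by
      rw [← h2, Real.sqrt_sq dist_nonneg]
    exact h3 ▸ Metric.infDist_le_dist_of_mem hmem'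
  · refine le_of_not_gt fun hlt => ?_
    rw [Metric.infDist_lt_iff hne] at hlt
    obtain ⟨y, hy, hdy⟩ := hlt
    obtain ⟨s, rfl⟩ := (mem_line_iff m q hq u hdir y).1 hy
    have h1 : dist x (s • u + q) ^ 2 < D := by
      nlinarith [Real.sq_sqrt hDnn, dist_nonneg (x := x) (y := s • u + q),
        Real.sqrt_nonneg D]
    rw [key s] at h1
    nlinarith [sq_nonneg (⟪x - q, u⟫ - s)]

/-- A line not contained in a circular cylinder meets the cylinder in at most two
points. -/
theorem line_meets_cylinder_in_two_points
    (m : AffineSubspace ℝ E3) (hm : IsLine m) (r : ℝ) (hr : 0 < r)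
    (L : AffineSubspace ℝ E3) (hL : IsLine L)
    (hnot : ¬ (L : Set E3) ⊆ {x : E3 | Metric.infDist x (m : Set E3) = r}) :
    ∃ a b : E3, (L : Set E3) ∩ {x : E3 | Metric.infDist x (m : Set E3) = r} ⊆ {a, b} := by
  -- set up the line m : point q, unit direction u
  obtain ⟨u0, hu00, hmu0⟩ := span_of_finrank_one m.direction hm
  have hq : ∃ q : E3, q ∈ m := by
    have : (m : Set E3).Nonempty := by
      rw [AffineSubspace.nonempty_iff_ne_bot]
      intro h
      rw [h] at hm
      rw [IsLine, AffineSubspace.direction_bot] at hm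
      simp at hm
    exact this
  obtain ⟨q, hq⟩ := hq
  set u : E3 := ‖u0‖⁻¹ • u0 with hu_def
  have hu : ‖u‖ = 1 := norm_smul_inv_norm hu00
  have hmu : m.direction = Submodule.span ℝ {u} := by
    rw [hmu0, hu_def, Submodule.span_singleton_smul_eq]
    exact (isUnit_iff_ne_zero.2 (inv_ne_zero (norm_ne_zero_iff.2 hu00)))
  -- set up the line L : point p, direction v
  obtain ⟨v, hv0, hLv⟩ := span_of_finrank_one L.direction hL
  have hp : ∃ p : E3, p ∈ L := by
    have : (L : Set E3).Nonempty := by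
      rw [AffineSubspace.nonempty_iff_ne_bot]
      intro h
      rw [h] at hL
      rw [IsLine, AffineSubspace.direction_bot] at hL
      simp at hL
    exact this
  obtain ⟨p, hp⟩ := hp
  -- membership in the cylinder for points of L
  have hD0 : ∀ x : E3, 0 ≤ ‖x - q‖^2 - ⟪x - q, u⟫^2 := by
    intro x
    have h1 := abs_real_inner_le_norm (x - q) u
    rw [hu, mul_one] at h1
    nlinarith [abs_nonneg ⟪x - q, u⟫, sq_abs ⟪x - q, u⟫]
  have hcyl : ∀ x : E3, Metric.infDist x (m : Set E3) = r ↔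
      ‖x - q‖^2 - ⟪x - q, u⟫^2 = r^2 := by
    intro x
    rw [infDist_line m q hq u hu hmu x]
    constructor
    · intro h
      rw [← Real.sq_sqrt (hD0 x), h]
    · intro h
      rw [h, Real.sqrt_sq hr.le]
  -- quadratic expansion along L
  set w : E3 := p - q with hw
  set A : ℝ := ‖v‖^2 - ⟪v, u⟫^2 with hA
  set B : ℝ := 2 * (⟪v, w⟫ - ⟪w, u⟫ * ⟪v, u⟫) with hB
  set C : ℝ := ‖w‖^2 - ⟪w, u⟫^2 with hC
  have expand : ∀ t : ℝ, ‖(t • v + p) - q‖^2 - ⟪(t • v + p) - q, u⟫^2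
      = A * t^2 + B * t + C := by
    intro t
    have h1 : (t • v + p) - q = t • v + w := by rw [hw]; abel
    rw [h1, norm_add_sq_real, inner_add_left, real_inner_smul_left,
      real_inner_smul_left, norm_smul, Real.norm_eq_abs]
    rw [show (|t| * ‖v‖) ^ 2 = t ^ 2 * ‖v‖ ^ 2 by rw [mul_pow, sq_abs]]
    rw [hA, hB, hC]; ring
  -- points of L are parametrized injectively
  have hinj : ∀ t1 t2 : ℝ, t1 • v + p = t2 • v + p → t1 = t2 := by
    intro t1 t2 h
    have : (t1 - t2) • v = 0 := by
      rw [sub_smul]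
      have := sub_eq_zero.2 h
      rw [add_sub_add_right_eq_sub] at this
      exact this
    rcases smul_eq_zero.1 this with h' | h'
    · exact sub_eq_zero.1 h'
    · exact absurd h' hv0
  -- the intersection set
  set S : Set E3 := (L : Set E3) ∩ {x : E3 | Metric.infDist x (m : Set E3) = r} with hS
  have hSchar : ∀ x ∈ S, ∃ t : ℝ, x = t • v + p ∧ A * t^2 + B * t + (C - r^2) = 0 := by
    rintro x ⟨hxL, hxC⟩
    obtain ⟨t, rfl⟩ := (mem_line_iff L p hp v hLv x).1 hxL
    refine ⟨t, rfl, ?_⟩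
    have := (hcyl _).1 hxC
    rw [expand t] at this
    linarith
  rcases Set.eq_empty_or_nonempty S with hSe | ⟨a, haS⟩
  · exact ⟨p, p, by rw [hSe]; exact Set.empty_subset _⟩
  by_cases hsub : S ⊆ {a}
  · exact ⟨a, a, fun x hx => by simpa using hsub hx⟩
  obtain ⟨b, hbS, hba⟩ : ∃ b ∈ S, b ≠ a := by
    rw [Set.not_subset] at hsub
    obtain ⟨b, hb, hb'⟩ := hsub
    exact ⟨b, hb, hb'⟩
  refine ⟨a, b, fun c hcS => ?_⟩
  by_contra hc
  simp only [Set.mem_insert_iff, Set.mem_singleton_iff, not_or] at hc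
  obtain ⟨hca, hcb⟩ := hc
  obtain ⟨ta, hae, haq⟩ := hSchar a haS
  obtain ⟨tb, hbe, hbq⟩ := hSchar b hbS
  obtain ⟨tc, hce, hcq⟩ := hSchar c hcS
  have hab : ta ≠ tb := fun h => hba (by rw [hbe, hae, h])
  have hac : ta ≠ tc := fun h => hca (by rw [hce, hae, h])
  have hbc : tb ≠ tc := fun h => hcb (by rw [hce, hbe, h])
  obtain ⟨hA0, hB0, hC0⟩ := quad_three_roots hab hac hbc haq hbq hcq
  -- then every point of L is on the cylinder
  apply hnot
  intro x hxL
  obtain ⟨t, rfl⟩ := (mem_line_iff L p hp v hLv x).1 hxL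
  show Metric.infDist _ (m : Set E3) = r
  rw [hcyl, expand t, hA0, hB0]
  linarith
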